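/- arXiv:2301.07817 — 3 statements merged into one kernel-verified Lean document; each statement's English description precedes it below -/
import Mathlib

section
/- Let H be a Hilbert space with norm from inner product L, P ⊂ H a closed convex cone, and |·|_p a norm satisfying |u|_p ≤ S^{−1/2}·L(u,u)^{1/2} for the optimal constant S > 0. Suppose also that for every u, min_{v∈P} |u − v|_p = |u⁻|_p where u⁻ is the negative part. Then for α = (1/2)·S^{p/(2(p−2))}, any u with dist_L(u, P) ≤ α and u⁻ ∈ N (i.e., L(u⁻,u⁻) = |u⁻|_p^p > 0) leads to a contradiction; i.e., the tubular neighborhood B_α(P) = {u : dist_L(u,P) ≤ α} is disjoint from the nodal Nehari set E = {u : u⁺, u⁻ ∈ N}. -/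
/-!
If `u⁻` lies on the Nehari manifold, the Sobolev bound `S^{1/2} |w|_p ≤ ‖w‖` applied to
`‖u⁻‖² = |u⁻|_p^p` forces `|u⁻|_p ≥ S^{1/(p-2)}`. On the other hand, `|u⁻|_p` is the
`|·|_p`-distance from `u` to `P`, so again by Sobolev
`dist(u, P) ≥ S^{1/2} |u⁻|_p ≥ S^{p/(2(p-2))} = 2α`, which is incompatible with `dist(u, P) ≤ α`.
-/

open Metric

theorem le_infDist_of_le_norm_sub {E : Type*} [SeminormedAddCommGroup E] {f : E → ℝ}
    {P : Set E} {u : E} {m : ℝ} (hP : P.Nonempty) (hf : ∀ x, f x ≤ ‖x‖)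
    (hm : ∀ v ∈ P, m ≤ f (u - v)) : m ≤ infDist u P :=
  (le_infDist hP).2 fun v hv => (hm v hv).trans <| (hf _).trans (dist_eq_norm u v).ge

theorem Real.sqrt_mul_le_of_le_rpow_neg_half_mul {S a b : ℝ} (hS : 0 < S)
    (h : a ≤ S ^ (-(1 : ℝ) / 2) * b) : √S * a ≤ b := by
  rwa [neg_div, Real.rpow_neg hS.le, ← Real.sqrt_eq_rpow, le_inv_mul_iff₀ (by positivity)] at h

theorem Real.rpow_inv_sub_two_le {p S t : ℝ} (hp : 2 < p) (hS : 0 < S) (ht : 0 < t)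
    (h : S * t ^ 2 ≤ t ^ p) : S ^ (p - 2)⁻¹ ≤ t := by
  rw [Real.rpow_inv_le_iff_of_pos hS.le ht.le (by linarith), Real.rpow_sub ht,
    Real.rpow_two, le_div_iff₀ (by positivity)]
  exact h

theorem Real.sqrt_mul_rpow_inv_sub_two {p S : ℝ} (hp : 2 < p) (hS : 0 < S) :
    √S * S ^ (p - 2)⁻¹ = S ^ (p / (2 * (p - 2))) := by
  have : p - 2 ≠ 0 := by linarith
  rw [Real.sqrt_eq_rpow, ← Real.rpow_add hS]
  congr 1
  field_simp
  ring

theorem rpow_inv_sub_two_le_of_norm_sq_eq {H : Type*} [SeminormedAddCommGroup H]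
    {Np : H → ℝ} {p S : ℝ} (hp : 2 < p) (hS : 0 < S)
    (hSob : ∀ u : H, Np u ≤ S ^ (-(1 : ℝ) / 2) * ‖u‖) {w : H} (hw0 : ‖w‖ ≠ 0)
    (hNp : 0 ≤ Np w) (hw : ‖w‖ ^ 2 = Np w ^ p) : S ^ (p - 2)⁻¹ ≤ Np w := by
  have ht : 0 < Np w := by
    refine hNp.lt_of_ne fun h => hw0 ?_
    rwa [← h, Real.zero_rpow (by linarith), sq_eq_zero_iff] at hw
  have hsob : √S * Np w ≤ ‖w‖ := Real.sqrt_mul_le_of_le_rpow_neg_half_mul hS (hSob w)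
  refine Real.rpow_inv_sub_two_le hp hS ht ?_
  calc S * Np w ^ 2 = (√S * Np w) ^ 2 := by rw [mul_pow, Real.sq_sqrt hS.le]
    _ ≤ ‖w‖ ^ 2 := by gcongr
    _ = Np w ^ p := hw

theorem stmt5_general {H : Type*} [NormedAddCommGroup H]
    (P : Set H)
    (p S : ℝ) (hp : 2 < p) (hS : 0 < S)
    (Np : H → ℝ) (hNp0 : ∀ u, 0 ≤ Np u)
    (hSob : ∀ u : H, Np u ≤ S ^ (-(1 : ℝ) / 2) * ‖u‖)
    (pos neg : H → H)
    (hmin : ∀ u : H, IsLeast {x : ℝ | ∃ v ∈ P, x = Np (u - v)} (Np (neg u)))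
    (E : Set H)
    (hE : E = {u : H | (pos u ≠ 0 ∧ ‖pos u‖ ^ 2 = Np (pos u) ^ p) ∧
                (neg u ≠ 0 ∧ ‖neg u‖ ^ 2 = Np (neg u) ^ p)})
    (α : ℝ) (hα : α = (1 / 2) * S ^ (p / (2 * (p - 2)))) :
    {u : H | Metric.infDist u P ≤ α} ∩ E = ∅ := by
  refine Set.eq_empty_of_forall_notMem fun u ⟨hdist, huE⟩ => ?_
  rw [hE] at huE
  obtain ⟨-, hne, hN⟩ := huE
  obtain ⟨v₀, hv₀, -⟩ := (hmin u).1
  have hlevel :=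
    rpow_inv_sub_two_le_of_norm_sq_eq hp hS hSob (norm_ne_zero_iff.2 hne) (hNp0 _) hN
  have hinfDist : √S * Np (neg u) ≤ infDist u P :=
    le_infDist_of_le_norm_sub ⟨v₀, hv₀⟩
      (fun x => Real.sqrt_mul_le_of_le_rpow_neg_half_mul hS (hSob x)) fun v hv =>
        mul_le_mul_of_nonneg_left ((hmin u).2 ⟨v, hv, rfl⟩) (Real.sqrt_nonneg S)
  have hα_pos : 0 < α := hα ▸ by positivity
  have : 2 * α ≤ α :=
    calc 2 * α = √S * S ^ (p - 2)⁻¹ := by rw [Real.sqrt_mul_rpow_inv_sub_two hp hS, hα]; ring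
      _ ≤ √S * Np (neg u) := by gcongr
      _ ≤ α := hinfDist.trans hdist
  linarith

/-- The tubular neighborhood `B_α(P)` of the nonnegative cone `P`, with
`α = (1/2)·S^{p/(2(p−2))}`, is disjoint from the nodal Nehari set
`E = {u : u⁺, u⁻ ∈ N}`. -/
theorem stmt5 {H : Type*} [NormedAddCommGroup H] [InnerProductSpace ℝ H] [CompleteSpace H]
    (P : Set H) (hPclosed : IsClosed P) (hPconvex : Convex ℝ P)
    (hPcone : ∀ a : ℝ, 0 ≤ a → ∀ v ∈ P, a • v ∈ P)
    (p S : ℝ) (hp : 2 < p) (hS : 0 < S)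
    (Np : H → ℝ) (hNp0 : ∀ u, 0 ≤ Np u)
    (hSob : ∀ u : H, Np u ≤ S ^ (-(1 : ℝ) / 2) * ‖u‖)
    (pos neg : H → H)
    (hmin : ∀ u : H, IsLeast {x : ℝ | ∃ v ∈ P, x = Np (u - v)} (Np (neg u)))
    (E : Set H)
    (hE : E = {u : H | (pos u ≠ 0 ∧ ‖pos u‖ ^ 2 = Np (pos u) ^ p) ∧
                (neg u ≠ 0 ∧ ‖neg u‖ ^ 2 = Np (neg u) ^ p)})
    (α : ℝ) (hα : α = (1 / 2) * S ^ (p / (2 * (p - 2)))) :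
    {u : H | Metric.infDist u P ≤ α} ∩ E = ∅ :=
  stmt5_general P p S hp hS Np hNp0 hSob pos neg hmin E hE α hα
end

section
/- In the setting of the previous statement, if additionally J satisfies the Palais–Smale condition on H and Z is closed and positively invariant under the negative gradient flow, then the infimum c = inf_Z J is attained at some v ∈ Z which is a critical point of J (∇J(v) = 0). -/
/-!
Start the negative gradient flow at a point `u ∈ Z` with `J u < c + ε`, where `c = inf_Z J`.
Along the flow `J` decreases at rate `‖∇J‖²` and stays `≥ c` (the flow does not leave `Z`),
so by the mean value theorem some point of the flow on `[0, 1]` has `‖∇J‖² < ε` and still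
`J < c + ε`. This yields a minimizing Palais–Smale sequence in `Z`; a subsequence converges,
and its limit `v` lies in `Z` and minimizes `J` there. As `∇J` need not be continuous, `∇J v = 0`
comes from the flow once more: `s ↦ J (φ s v)` is minimal at `s = 0` on `[0, ∞)`, so its
derivative `-‖∇J v‖²` there is nonnegative.
-/

open Filter Set Topology

theorem HasDerivAt.nonneg_of_isMinOn_Ici {f : ℝ → ℝ} {f' a : ℝ} (hf : HasDerivAt f f' a)
    (hmin : IsMinOn f (Ici a) a) : 0 ≤ f' := by
  have h_one : (1 : ℝ) ∈ posTangentConeAt (Ici a) a :=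
    mem_posTangentConeAt_of_segment_subset (by
      rw [segment_eq_Icc (by linarith)]; exact Icc_subset_Ici_self)
  simpa using hmin.localize.hasFDerivWithinAt_nonneg hf.hasDerivWithinAt.hasFDerivWithinAt h_one

section GradientFlow

variable {H : Type*} [NormedAddCommGroup H] [InnerProductSpace ℝ H] [CompleteSpace H]

theorem HasGradientAt.hasDerivAt_comp_of_hasDerivAt_neg {J : H → ℝ} {g : H} {γ : ℝ → H}
    {t : ℝ} (hJ : HasGradientAt J g (γ t)) (hγ : HasDerivAt γ (-g) t) :
    HasDerivAt (fun s => J (γ s)) (-‖g‖ ^ 2) t := by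
  refine (hJ.hasFDerivAt.comp_hasDerivAt t hγ).congr_deriv ?_
  simp [InnerProductSpace.toDual_apply_apply, inner_neg_right]

variable {J : H → ℝ} {gradJ : H → H} {γ : ℝ → H}

theorem hasDerivAt_comp_gradientFlow (hgrad : ∀ u, HasGradientAt J (gradJ u) u)
    (hγ : ∀ t, 0 ≤ t → HasDerivAt γ (-gradJ (γ t)) t) {t : ℝ} (ht : 0 ≤ t) :
    HasDerivAt (fun s => J (γ s)) (-‖gradJ (γ t)‖ ^ 2) t :=
  (hgrad (γ t)).hasDerivAt_comp_of_hasDerivAt_neg (hγ t ht)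

theorem antitoneOn_comp_gradientFlow (hgrad : ∀ u, HasGradientAt J (gradJ u) u)
    (hγ : ∀ t, 0 ≤ t → HasDerivAt γ (-gradJ (γ t)) t) :
    AntitoneOn (fun s => J (γ s)) (Ici 0) := by
  have hderiv := fun t (ht : t ∈ Ici (0 : ℝ)) => hasDerivAt_comp_gradientFlow hgrad hγ ht
  refine antitoneOn_of_hasDerivWithinAt_nonpos (convex_Ici 0)
    (fun t ht => (hderiv t ht).continuousAt.continuousWithinAt)
    (fun t ht => (hderiv t (interior_subset ht)).hasDerivWithinAt) ?_
  intro t _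
  exact neg_nonpos.mpr (sq_nonneg _)

theorem exists_sq_norm_gradient_eq_of_gradientFlow (hgrad : ∀ u, HasGradientAt J (gradJ u) u)
    (hγ : ∀ t, 0 ≤ t → HasDerivAt γ (-gradJ (γ t)) t) :
    ∃ ξ ∈ Ioo (0 : ℝ) 1, ‖gradJ (γ ξ)‖ ^ 2 = J (γ 0) - J (γ 1) := by
  have hderiv := fun t (ht : 0 ≤ t) => hasDerivAt_comp_gradientFlow hgrad hγ ht
  obtain ⟨ξ, hξ, h_slope⟩ := exists_hasDerivAt_eq_slope (fun s => J (γ s))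
    (fun t => -‖gradJ (γ t)‖ ^ 2) zero_lt_one
    (fun t ht => (hderiv t ht.1).continuousAt.continuousWithinAt)
    (fun t ht => hderiv t ht.1.le)
  exact ⟨ξ, hξ, by linarith⟩

theorem gradient_eq_zero_of_isMinOn_gradientFlow (hgrad : ∀ u, HasGradientAt J (gradJ u) u)
    (hγ : ∀ t, 0 ≤ t → HasDerivAt γ (-gradJ (γ t)) t)
    (hmin : IsMinOn (fun s => J (γ s)) (Ici 0) 0) : gradJ (γ 0) = 0 := by
  have h := (hasDerivAt_comp_gradientFlow hgrad hγ le_rfl).nonneg_of_isMinOn_Ici hmin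
  rw [neg_nonneg] at h
  exact norm_eq_zero.mp (pow_eq_zero_iff two_ne_zero |>.mp (le_antisymm h (sq_nonneg _)))

end GradientFlow

section InvariantSet

variable {H : Type*} [NormedAddCommGroup H] [InnerProductSpace ℝ H] [CompleteSpace H]
  {J : H → ℝ} {gradJ : H → H} {φ : ℝ → H → H} {Z : Set H}

theorem exists_mem_lt_sInf_add_of_gradientFlow (hgrad : ∀ u, HasGradientAt J (gradJ u) u)
    (hφ0 : ∀ u, φ 0 u = u)
    (hφ' : ∀ u t, 0 ≤ t → HasDerivAt (fun s => φ s u) (-gradJ (φ t u)) t)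
    (hZne : Z.Nonempty) (hZinv : ∀ u ∈ Z, ∀ t : ℝ, 0 ≤ t → φ t u ∈ Z)
    (hbdd : BddBelow (J '' Z)) {ε : ℝ} (hε : 0 < ε) :
    ∃ w ∈ Z, J w < sInf (J '' Z) + ε ∧ ‖gradJ w‖ ^ 2 < ε := by
  obtain ⟨_, ⟨u, hu, rfl⟩, hJu⟩ :=
    exists_lt_of_csInf_lt (hZne.image J) (lt_add_of_pos_right (sInf (J '' Z)) hε)
  obtain ⟨ξ, hξ, hgrad_sq⟩ := exists_sq_norm_gradient_eq_of_gradientFlow hgrad (hφ' u)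
  have h_descent : J (φ ξ u) ≤ J (φ 0 u) :=
    antitoneOn_comp_gradientFlow hgrad (hφ' u) self_mem_Ici hξ.1.le hξ.1.le
  have h_inf_le : sInf (J '' Z) ≤ J (φ 1 u) := csInf_le hbdd ⟨_, hZinv u hu 1 zero_le_one, rfl⟩
  rw [hφ0] at h_descent hgrad_sq
  exact ⟨φ ξ u, hZinv u hu ξ hξ.1.le, by linarith, by linarith⟩

theorem exists_minimizing_palaisSmale_seq_of_gradientFlow
    (hgrad : ∀ u, HasGradientAt J (gradJ u) u) (hφ0 : ∀ u, φ 0 u = u)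
    (hφ' : ∀ u t, 0 ≤ t → HasDerivAt (fun s => φ s u) (-gradJ (φ t u)) t)
    (hZne : Z.Nonempty) (hZinv : ∀ u ∈ Z, ∀ t : ℝ, 0 ≤ t → φ t u ∈ Z)
    (hbdd : BddBelow (J '' Z)) :
    ∃ w : ℕ → H, (∀ k, w k ∈ Z) ∧ Tendsto (fun k => J (w k)) atTop (𝓝 (sInf (J '' Z))) ∧
      Tendsto (fun k => ‖gradJ (w k)‖) atTop (𝓝 0) := by
  set ε : ℕ → ℝ := fun k => 1 / ((k : ℝ) + 1)
  have hε_pos : ∀ k, 0 < ε k := fun k => by positivity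
  have hε : Tendsto ε atTop (𝓝 0) := tendsto_one_div_add_atTop_nhds_zero_nat
  choose w hwZ hJw hgw using fun k =>
    exists_mem_lt_sInf_add_of_gradientFlow hgrad hφ0 hφ' hZne hZinv hbdd (pow_pos (hε_pos k) 2)
  refine ⟨w, hwZ, ?_, ?_⟩
  · exact tendsto_of_tendsto_of_tendsto_of_le_of_le tendsto_const_nhds
      (by simpa using tendsto_const_nhds.add (hε.pow 2))
      (fun k => csInf_le hbdd ⟨_, hwZ k, rfl⟩) (fun k => (hJw k).le)
  · exact squeeze_zero (fun _ => norm_nonneg _)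
      (fun k => ((pow_lt_pow_iff_left₀ (norm_nonneg _) (hε_pos k).le two_ne_zero).mp (hgw k)).le)
      hε

end InvariantSet

/-- If moreover `J` satisfies the Palais–Smale condition, then the infimum of
`J` over the closed, positively invariant set `Z` is attained at a critical
point `v ∈ Z` of `J`. -/
theorem stmt8 {H : Type*} [NormedAddCommGroup H] [InnerProductSpace ℝ H] [CompleteSpace H]
    (J : H → ℝ) (gradJ : H → H) (hgrad : ∀ u, HasGradientAt J (gradJ u) u)
    (φ : ℝ → H → H) (hφ0 : ∀ u, φ 0 u = u)
    (hφ' : ∀ (u : H) (t : ℝ), 0 ≤ t →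
      HasDerivAt (fun s => φ s u) (-(gradJ (φ t u))) t)
    (Z : Set H) (hZclosed : IsClosed Z) (hZne : Z.Nonempty)
    (hZinv : ∀ u ∈ Z, ∀ t : ℝ, 0 ≤ t → φ t u ∈ Z)
    (hbdd : BddBelow (J '' Z))
    (hPS : ∀ u : ℕ → H, (∃ C : ℝ, ∀ k, |J (u k)| ≤ C) →
      Tendsto (fun k => ‖gradJ (u k)‖) atTop (nhds 0) →
      ∃ (v : H) (σ : ℕ → ℕ), StrictMono σ ∧ Tendsto (u ∘ σ) atTop (nhds v)) :
    ∃ v ∈ Z, J v = sInf (J '' Z) ∧ gradJ v = 0 := by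
  obtain ⟨w, hwZ, hJw, hgw⟩ :=
    exists_minimizing_palaisSmale_seq_of_gradientFlow hgrad hφ0 hφ' hZne hZinv hbdd
  obtain ⟨C, hC⟩ := isBounded_iff_forall_norm_le.mp (Metric.isBounded_range_of_tendsto _ hJw)
  obtain ⟨v, σ, hσ, hv⟩ := hPS w ⟨C, fun k => hC _ (mem_range_self k)⟩ hgw
  have hvZ : v ∈ Z := hZclosed.mem_of_tendsto hv (Eventually.of_forall fun k => hwZ (σ k))
  have hJv : J v = sInf (J '' Z) :=
    tendsto_nhds_unique ((hgrad v).differentiableAt.continuousAt.tendsto.comp hv)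
      (hJw.comp hσ.tendsto_atTop)
  have hmin : IsMinOn (fun s => J (φ s v)) (Ici 0) 0 := fun t ht => by
    simpa [hφ0, hJv] using csInf_le hbdd ⟨_, hZinv v hvZ t ht, rfl⟩
  refine ⟨v, hvZ, hJv, ?_⟩
  simpa [hφ0] using gradient_eq_zero_of_isMinOn_gradientFlow hgrad (hφ' v) hmin
end

section
/- Let L: H×H → ℝ be an inner product on a Hilbert space, P ⊂ H a closed convex cone, and suppose K : H → H satisfies: dist_L(K(u), P)·L(K(u)⁻, K(u)⁻)^{1/2} ≤ L(K(u)⁻, K(u)⁻) ≤ S^{−p/2}·dist_L(u,P)^{p−1}·L(K(u)⁻,K(u)⁻)^{1/2} for all u, where p > 2 and S > 0. Then for α = (1/2)S^{p/(2(p−2))}: if dist_L(u, P) ≤ α, then dist_L(K(u), P) ≤ (1/2^{p−1})·S^{p/(2(p−2))} < α; i.e., K maps the tubular neighborhood B_α(P) into its interior. -/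
/-- The solution operator `K` maps the tubular neighborhood `B_α(P)` of the
cone `P` into its interior: if `dist_L(u,P) ≤ α` with
`α = (1/2)S^{p/(2(p−2))}`, then `dist_L(K(u),P) ≤ (1/2^{p−1})S^{p/(2(p−2))} < α`. -/
theorem stmt11 {H : Type*} [NormedAddCommGroup H] [InnerProductSpace ℝ H] [CompleteSpace H]
    (P : Set H) (hPclosed : IsClosed P) (hPconvex : Convex ℝ P)
    (hPcone : ∀ a : ℝ, 0 ≤ a → ∀ v ∈ P, a • v ∈ P)
    (p S : ℝ) (hp : 2 < p) (hS : 0 < S)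
    (K neg : H → H)
    (hdn : ∀ v : H, Metric.infDist v P ≤ ‖neg v‖)
    (hchain : ∀ u : H,
      Metric.infDist (K u) P * ‖neg (K u)‖ ≤ ‖neg (K u)‖ ^ 2 ∧
      ‖neg (K u)‖ ^ 2 ≤ S ^ (-p / 2) * Metric.infDist u P ^ (p - 1) * ‖neg (K u)‖)
    (α : ℝ) (hα : α = (1 / 2) * S ^ (p / (2 * (p - 2)))) :
    ∀ u : H, Metric.infDist u P ≤ α →
      Metric.infDist (K u) P ≤ (1 / 2 ^ (p - 1)) * S ^ (p / (2 * (p - 2))) ∧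
      (1 / 2 ^ (p - 1) : ℝ) * S ^ (p / (2 * (p - 2))) < α := by
  intro u hu
  set β : ℝ := p / (2 * (p - 2)) with hβ
  have hp2 : (0 : ℝ) < p - 2 := by linarith
  have hSβ : (0 : ℝ) < S ^ β := Real.rpow_pos_of_pos hS β
  have h2p : (1 : ℝ) < 2 ^ (p - 1) := by
    have : (2 : ℝ) ^ (0 : ℝ) < 2 ^ (p - 1) :=
      Real.rpow_lt_rpow_left_iff (x := 2) (by norm_num) |>.mpr (by linarith)
    simpa using this
  have hlt : (1 / 2 ^ (p - 1) : ℝ) * S ^ β < α := by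
    rw [hα]
    apply mul_lt_mul_of_pos_right _ hSβ
    rw [div_lt_div_iff₀ (by linarith) (by norm_num)]
    have : (2 : ℝ) ^ (1 : ℝ) < 2 ^ (p - 1) :=
      Real.rpow_lt_rpow_left_iff (x := 2) (by norm_num) |>.mpr (by linarith)
    simpa using this
  refine ⟨?_, hlt⟩
  have hrhs_nonneg : (0 : ℝ) ≤ (1 / 2 ^ (p - 1)) * S ^ β := by positivity
  rcases eq_or_lt_of_le (norm_nonneg (neg (K u))) with hn | hn
  · calc Metric.infDist (K u) P ≤ ‖neg (K u)‖ := hdn (K u)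
      _ = 0 := hn.symm
      _ ≤ _ := hrhs_nonneg
  · obtain ⟨h1, h2⟩ := hchain u
    have key : Metric.infDist (K u) P ≤ S ^ (-p / 2) * Metric.infDist u P ^ (p - 1) := by
      have := le_trans h1 h2
      have h' : Metric.infDist (K u) P * ‖neg (K u)‖ ≤
          S ^ (-p / 2) * Metric.infDist u P ^ (p - 1) * ‖neg (K u)‖ := this
      exact le_of_mul_le_mul_right h' hn
    have hd0 : (0 : ℝ) ≤ Metric.infDist u P := Metric.infDist_nonneg
    have hα0 : (0 : ℝ) ≤ α := le_trans hd0 hu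
    have hpow : Metric.infDist u P ^ (p - 1) ≤ α ^ (p - 1) :=
      Real.rpow_le_rpow hd0 hu (by linarith)
    have hαpow : α ^ (p - 1) = (1 / 2 ^ (p - 1)) * S ^ (β * (p - 1)) := by
      rw [hα, Real.mul_rpow (by norm_num) hSβ.le, ← Real.rpow_mul hS.le,
        Real.div_rpow (by norm_num) (by norm_num), Real.one_rpow]
    have hcomb : S ^ (-p / 2) * S ^ (β * (p - 1)) = S ^ β := by
      rw [← Real.rpow_add hS]
      congr 1
      have hne : 2 * (p - 2) ≠ 0 := by positivity
      rw [hβ]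
      field_simp
      ring
    calc Metric.infDist (K u) P
        ≤ S ^ (-p / 2) * Metric.infDist u P ^ (p - 1) := key
      _ ≤ S ^ (-p / 2) * ((1 / 2 ^ (p - 1)) * S ^ (β * (p - 1))) := by
          rw [← hαpow]
          exact mul_le_mul_of_nonneg_left hpow (Real.rpow_nonneg hS.le _)
      _ = (1 / 2 ^ (p - 1)) * (S ^ (-p / 2) * S ^ (β * (p - 1))) := by ring
      _ = (1 / 2 ^ (p - 1)) * S ^ β := by rw [hcomb]
end
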